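/- In any stable matching M of the extended instance I'_{3,3}(B), every hospital in Z ∪ C' is matched and every resident in P ∪ T ∪ Q is matched, where Z = {z_j^r : 1≤j≤m, 1≤r≤5}, C' = {c_j^s : 1≤j≤m, 1≤s≤3}, P = {p_j^s : 1≤j≤m, 1≤s≤6}, Q = {q_j : 1≤j≤m} and T = {t_j : 1≤j≤m}. -/

import Mathlib

/-- A one-to-one HRC instance: residents are partitioned into single residents and
ordered couples; all hospitals have capacity 1. -/
structure HRC1 (R H : Type) where
  singles : List R
  couples : List (R × R)
  singlePref : R → List H
  couplePref : R × R → List (H × H)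
  hospPref : H → List R

namespace HRC1

/-- `x` precedes `y` on the strict preference list `l`. -/
def Prefers {α : Type} [DecidableEq α] (l : List α) (x y : α) : Prop :=
  x ∈ l ∧ y ∈ l ∧ l.idxOf x < l.idxOf y

variable {R H : Type} [DecidableEq R] [DecidableEq H]

/-- `M` is a matching of the instance `I`. -/
def IsMatching (I : HRC1 R H) (M : R → Option H) : Prop :=
  (∀ r₁ r₂ h, M r₁ = some h → M r₂ = some h → r₁ = r₂) ∧
  (∀ r ∈ I.singles, ∀ h, M r = some h → h ∈ I.singlePref r) ∧
  (∀ c ∈ I.couples,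
    (M c.1 = none ∧ M c.2 = none) ∨
    ∃ hp ∈ I.couplePref c, M c.1 = some hp.1 ∧ M c.2 = some hp.2) ∧
  (∀ r, (M r).isSome → r ∈ I.singles ∨ ∃ c ∈ I.couples, r = c.1 ∨ r = c.2)

/-- Hospital `h` is unmatched in `M`. -/
def HospFree (M : R → Option H) (h : H) : Prop := ∀ r, M r ≠ some h

/-- Hospital `h` is unmatched in `M`, or prefers `r` to its current assignee. -/
def HospOpenFor (I : HRC1 R H) (M : R → Option H) (h : H) (r : R) : Prop :=
  HospFree M h ∨ ∃ r', M r' = some h ∧ Prefers (I.hospPref h) r r'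

/-- Blocking pair consisting of a single resident `r` and a hospital `h`. -/
def BlockSingle (I : HRC1 R H) (M : R → Option H) (r : R) (h : H) : Prop :=
  r ∈ I.singles ∧ h ∈ I.singlePref r ∧
  (M r = none ∨ ∃ h', M r = some h' ∧ Prefers (I.singlePref r) h h') ∧
  I.HospOpenFor M h r

/-- Blocking pair consisting of a couple `c` and a pair of hospitals `hp` on its joint list. -/
def BlockCouple (I : HRC1 R H) (M : R → Option H) (c : R × R) (hp : H × H) : Prop :=
  c ∈ I.couples ∧ hp ∈ I.couplePref c ∧
  ((M c.1 = none ∧ M c.2 = none) ∨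
    ∃ hp' ∈ I.couplePref c, M c.1 = some hp'.1 ∧ M c.2 = some hp'.2 ∧
      Prefers (I.couplePref c) hp hp') ∧
  (M c.1 = some hp.1 ∨ I.HospOpenFor M hp.1 c.1) ∧
  (M c.2 = some hp.2 ∨ I.HospOpenFor M hp.2 c.2)

/-- `M` is a stable matching of the instance `I`. -/
def Stable (I : HRC1 R H) (M : R → Option H) : Prop :=
  I.IsMatching M ∧ (∀ r h, ¬ I.BlockSingle M r h) ∧ (∀ c hp, ¬ I.BlockCouple M c hp)

end HRC1

/-- An instance of (2,2)-E3-SAT: `m` clauses, each with exactly 3 literals over `n`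
variables (a literal is a variable together with a polarity, `true` for positive);
`occ l` enumerates the two occurrences of the literal `l`, so that each of the literals
`vᵢ` and `¬vᵢ` appears exactly twice. -/
structure E3SAT (n m : ℕ) where
  clause : Fin m → Fin 3 → Fin n × Bool
  occ : Fin n × Bool → Fin 2 → Fin m × Fin 3
  occ_spec : ∀ l r, clause (occ l r).1 (occ l r).2 = l
  occ_inj : ∀ l, occ l 0 ≠ occ l 1
  occ_surj : ∀ j s, ∃ r, occ (clause j s) r = (j, s)

namespace E3SAT

variable {n m : ℕ}

/-- `B` is satisfiable. -/
def Satisfiable (B : E3SAT n m) : Prop :=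
  ∃ f : Fin n → Bool, ∀ j : Fin m, ∃ s : Fin 3, f (B.clause j s).1 = (B.clause j s).2

/-- The index (`0` or `1`) of the occurrence of its literal that position `s` of
clause `j` constitutes. -/
def rIdx (B : E3SAT n m) (j : Fin m) (s : Fin 3) : Fin 2 :=
  if B.occ (B.clause j s) 0 = (j, s) then 0 else 1

end E3SAT

/-- Residents of the extended instance `I′₃₃(B)`: `X i r = x_{4i+r}`, `K i r = k_{4i+r}`,
`P j s = p_j^{s+1}`, `Q j = q_{j+1}`, `T j = t_{j+1}`, `U i r s = u^{s+1}_{4i+r}`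
(0-based indices). -/
inductive Res3E (n m : ℕ)
  | X (i : Fin n) (r : Fin 4)
  | K (i : Fin n) (r : Fin 4)
  | P (j : Fin m) (s : Fin 6)
  | Q (j : Fin m)
  | T (j : Fin m)
  | U (i : Fin n) (r : Fin 4) (s : Fin 5)
deriving DecidableEq

/-- Hospitals of the extended instance `I′₃₃(B)`: `Y i r = y_{4i+r}`, `L i r = l_{4i+r}`,
`C j s = c_j^{s+1}`, `Z j r = z_j^{r+1}`, `Hh i r s = h^{s+1}_{4i+r}` (0-based indices). -/
inductive Hos3E (n m : ℕ)
  | Y (i : Fin n) (r : Fin 4)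
  | L (i : Fin n) (r : Fin 4)
  | C (j : Fin m) (s : Fin 3)
  | Z (j : Fin m) (r : Fin 5)
  | Hh (i : Fin n) (r : Fin 4) (s : Fin 4)
deriving DecidableEq

variable {n m : ℕ}

/-- The hospital `c(x_{4i+r})`: for `r ∈ {0,1}` the clause hospital of the `(r+1)`-th
occurrence of `vᵢ`; for `r ∈ {2,3}` that of the `(r−1)`-th occurrence of `¬vᵢ`. -/
def cX (B : E3SAT n m) (i : Fin n) (r : Fin 4) : Hos3E n m :=
  have hr := r.isLt
  let o := B.occ (i, decide (r.val < 2)) ⟨r.val % 2, by omega⟩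
  Hos3E.C o.1 o.2

/-- The resident `x(c_j^{s+1})` corresponding to the literal at position `s` of
clause `c_j`. -/
def xOfC (B : E3SAT n m) (j : Fin m) (s : Fin 3) : Res3E n m :=
  let l := B.clause j s
  have hv : (B.rIdx j s).val < 2 := (B.rIdx j s).isLt
  if l.2 then Res3E.X l.1 ⟨(B.rIdx j s).val, by omega⟩
  else Res3E.X l.1 ⟨(B.rIdx j s).val + 2, by omega⟩

/-- The extended one-to-one HRC instance `I′₃₃(B)` constructed from the
(2,2)-E3-SAT instance `B`. -/
def instI33E (B : E3SAT n m) : HRC1 (Res3E n m) (Hos3E n m) where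
  singles :=
    ((List.finRange m).map fun j => Res3E.Q j) ++
    ((List.finRange m).map fun j => Res3E.T j) ++
    ((List.finRange n).flatMap fun i =>
      (List.finRange 4).map fun r => Res3E.U i r 4)
  couples :=
    ((List.finRange n).flatMap fun i =>
      (List.finRange 4).map fun r => (Res3E.X i r, Res3E.K i r)) ++
    ((List.finRange m).flatMap fun j =>
      (List.finRange 3).map fun s =>
        (Res3E.P j ⟨s.val, by have := s.isLt; omega⟩,
         Res3E.P j ⟨s.val + 3, by have := s.isLt; omega⟩)) ++
    ((List.finRange n).flatMap fun i =>
      (List.finRange 4).flatMap fun r =>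
        [(Res3E.U i r 0, Res3E.U i r 1), (Res3E.U i r 2, Res3E.U i r 3)])
  singlePref := fun r => match r with
    | Res3E.Q j => [Hos3E.C j 0, Hos3E.C j 1, Hos3E.C j 2]
    | Res3E.T j => [Hos3E.Z j 2, Hos3E.Z j 3, Hos3E.Z j 4]
    | Res3E.U i r s => if s = 4 then [Hos3E.Y i r, Hos3E.Hh i r 0] else []
    | _ => []
  couplePref := fun c => match c with
    | (Res3E.X i r, Res3E.K i' r') =>
        if i' = i ∧ r' = r then
          if r = 0 then
            [(Hos3E.Y i 0, Hos3E.L i 0), (cX B i 0, Hos3E.L i 1),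
             (Hos3E.Y i 1, Hos3E.L i 1)]
          else if r = 1 then
            [(Hos3E.Y i 1, Hos3E.L i 1), (cX B i 1, Hos3E.L i 2),
             (Hos3E.Y i 2, Hos3E.L i 2)]
          else if r = 2 then
            [(Hos3E.Y i 3, Hos3E.L i 3), (cX B i 2, Hos3E.L i 2),
             (Hos3E.Y i 2, Hos3E.L i 2)]
          else
            [(Hos3E.Y i 0, Hos3E.L i 0), (cX B i 3, Hos3E.L i 3),
             (Hos3E.Y i 3, Hos3E.L i 3)]
        else []
    | (Res3E.P j s, Res3E.P j' s') =>
        if hc : j' = j ∧ s.val < 3 ∧ s'.val = s.val + 3 then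
          [(Hos3E.Z j 0, Hos3E.Z j 1),
           (Hos3E.C j ⟨s.val, hc.2.1⟩, Hos3E.Z j ⟨s.val + 2, by have := hc.2.1; omega⟩)]
        else []
    | (Res3E.U i r s, Res3E.U i' r' s') =>
        if i' = i ∧ r' = r then
          if s = 0 ∧ s' = 1 then [(Hos3E.Hh i r 0, Hos3E.Hh i r 1)]
          else if s = 2 ∧ s' = 3 then
            [(Hos3E.Hh i r 0, Hos3E.Hh i r 3), (Hos3E.Hh i r 2, Hos3E.Hh i r 1)]
          else []
        else []
    | _ => []
  hospPref := fun hh => match hh with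
    | Hos3E.Y i r =>
        (if r = 0 then [Res3E.X i 0, Res3E.X i 3]
         else if r = 1 then [Res3E.X i 1, Res3E.X i 0]
         else if r = 2 then [Res3E.X i 1, Res3E.X i 2]
         else [Res3E.X i 2, Res3E.X i 3]) ++ [Res3E.U i r 4]
    | Hos3E.L i r =>
        if r = 0 then [Res3E.K i 3, Res3E.K i 0]
        else if r = 1 then [Res3E.K i 0, Res3E.K i 1]
        else if r = 2 then [Res3E.K i 2, Res3E.K i 1]
        else [Res3E.K i 3, Res3E.K i 2]
    | Hos3E.C j s =>
        [Res3E.P j ⟨s.val, by have := s.isLt; omega⟩, xOfC B j s, Res3E.Q j]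
    | Hos3E.Z j r =>
        if r = 0 then [Res3E.P j 0, Res3E.P j 1, Res3E.P j 2]
        else if r = 1 then [Res3E.P j 5, Res3E.P j 4, Res3E.P j 3]
        else if r = 2 then [Res3E.P j 3, Res3E.T j]
        else if r = 3 then [Res3E.P j 4, Res3E.T j]
        else [Res3E.P j 5, Res3E.T j]
    | Hos3E.Hh i r s =>
        if s = 0 then [Res3E.U i r 4, Res3E.U i r 0, Res3E.U i r 2]
        else if s = 1 then [Res3E.U i r 3, Res3E.U i r 1]
        else if s = 2 then [Res3E.U i r 2]
        else [Res3E.U i r 3]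

/-!
In the variable gadget of `vᵢ`, the single resident `u^5_{4i+r}` holds `y_{4i+r}` unless some
`x_{4i+a}` does. If `u^5` holds `y_{4i+r}`, then `h^1_{4i+r}` is left to the couples
`(u^1, u^2)` and `(u^3, u^4)`, and these two couples admit no stable assignment among
`h^1, …, h^4`. So each of the four hospitals `y_{4i+r}` is held by one of the four residents
`x_{4i+a}`, and by pigeonhole no `x` is ever assigned a clause hospital `c_j^s`.

In the gadget of the clause `c_j`, some couple `(p_j^a, p_j^{a+3})` takes its first choice
`(z_j^1, z_j^2)`: otherwise both hospitals are free and `(p_j^1, p_j^4)` blocks. The other two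
couples then take their second choices `(c_j^s, z_j^{s+2})`, where they are ranked first.
What remains is `z_j^{a+2}`, which only `t_j` can still take, and `c_j^a`, which only `q_j`
can still take (no `x` can); since all their other choices are taken, both must be matched
there.
-/

namespace HRC1

theorem prefers_cons_of_ne {α : Type} [DecidableEq α] {x y : α} {l : List α}
    (hy : y ∈ x :: l) (hne : y ≠ x) : Prefers (x :: l) x y := by
  refine ⟨List.mem_cons_self, hy, ?_⟩
  rw [List.idxOf_cons_self, List.idxOf_cons_ne _ (Ne.symm hne)]
  omega

variable {R H : Type} {I : HRC1 R H} {M : R → Option H}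

def AcceptsApplicants (I : HRC1 R H) : Prop :=
  (∀ r ∈ I.singles, ∀ h ∈ I.singlePref r, r ∈ I.hospPref h) ∧
  ∀ c ∈ I.couples, ∀ hp ∈ I.couplePref c,
    c.1 ∈ I.hospPref hp.1 ∧ c.2 ∈ I.hospPref hp.2

theorem IsMatching.eq_of_eq_some (hM : I.IsMatching M) {r₁ r₂ : R} {h : H}
    (h₁ : M r₁ = some h) (h₂ : M r₂ = some h) : r₁ = r₂ :=
  hM.1 r₁ r₂ h h₁ h₂

theorem IsMatching.mem_hospPref (hM : I.IsMatching M) (hI : I.AcceptsApplicants) {r : R}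
    {h : H} (hr : M r = some h) : r ∈ I.hospPref h := by
  obtain ⟨-, hsingle, hcouple, hdom⟩ := hM
  rcases hdom r (by simp [hr]) with hs | ⟨c, hc, rfl | rfl⟩
  · exact hI.1 r hs h (hsingle r hs h hr)
  all_goals
    rcases hcouple c hc with ⟨h1, h2⟩ | ⟨hp, hp_mem, h1, h2⟩
    · simp_all
  · obtain rfl : hp.1 = h := Option.some.inj (h1.symm.trans hr)
    exact (hI.2 c hc hp hp_mem).1
  · obtain rfl : hp.2 = h := Option.some.inj (h2.symm.trans hr)
    exact (hI.2 c hc hp hp_mem).2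

variable [DecidableEq R] [DecidableEq H]

theorem hospOpenFor_of_forall {h : H} {r : R}
    (hocc : ∀ r', M r' = some h → Prefers (I.hospPref h) r r') : I.HospOpenFor M h r := by
  by_cases hfree : HospFree M h
  · exact Or.inl hfree
  · obtain ⟨r', hr'⟩ : ∃ r', M r' = some h := by simpa [HospFree] using hfree
    exact Or.inr ⟨r', hr', hocc r' hr'⟩

namespace Stable

theorem single_assigned_of_open (hM : I.Stable M) {r : R} {h : H} (hr : r ∈ I.singles)
    (hh : h ∈ I.singlePref r) (hopen : I.HospOpenFor M h r) :
    ∃ h', M r = some h' ∧ h' ∈ I.singlePref r ∧ ¬ Prefers (I.singlePref r) h h' := by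
  by_contra! hno
  rcases hMr : M r with _ | h'
  · exact hM.2.1 r h ⟨hr, hh, Or.inl hMr, hopen⟩
  · have hh' := hM.1.2.1 r hr h' hMr
    exact hM.2.1 r h ⟨hr, hh, Or.inr ⟨h', hMr, hno h' hMr hh'⟩, hopen⟩

theorem couple_assigned_of_open (hM : I.Stable M) {c : R × R} {hp : H × H}
    (hc : c ∈ I.couples) (hhp : hp ∈ I.couplePref c)
    (hopen₁ : M c.1 = some hp.1 ∨ I.HospOpenFor M hp.1 c.1)
    (hopen₂ : M c.2 = some hp.2 ∨ I.HospOpenFor M hp.2 c.2) :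
    ∃ hp' ∈ I.couplePref c, M c.1 = some hp'.1 ∧ M c.2 = some hp'.2 ∧
      ¬ Prefers (I.couplePref c) hp hp' := by
  by_contra! hno
  rcases hM.1.2.2.1 c hc with hnone | ⟨hp', hp'_mem, h₁, h₂⟩
  · exact hM.2.2 c hp ⟨hc, hhp, Or.inl hnone, hopen₁, hopen₂⟩
  · exact hM.2.2 c hp
      ⟨hc, hhp, Or.inr ⟨hp', hp'_mem, h₁, h₂, hno hp' hp'_mem h₁ h₂⟩, hopen₁, hopen₂⟩

theorem single_eq_head_of_open (hM : I.Stable M) {r : R} {h : H} {l : List H}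
    (hr : r ∈ I.singles) (hpref : I.singlePref r = h :: l) (hopen : I.HospOpenFor M h r) :
    M r = some h := by
  obtain ⟨h', hMr, hh', hnot⟩ := hM.single_assigned_of_open hr (by simp [hpref]) hopen
  by_contra hne
  rw [hpref] at hh' hnot
  exact hnot (prefers_cons_of_ne hh' fun h'_eq => hne (h'_eq ▸ hMr))

theorem couple_eq_head_of_open (hM : I.Stable M) {c : R × R} {hp : H × H} {l : List (H × H)}
    (hc : c ∈ I.couples) (hpref : I.couplePref c = hp :: l)
    (hopen₁ : M c.1 = some hp.1 ∨ I.HospOpenFor M hp.1 c.1)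
    (hopen₂ : M c.2 = some hp.2 ∨ I.HospOpenFor M hp.2 c.2) :
    M c.1 = some hp.1 ∧ M c.2 = some hp.2 := by
  obtain ⟨hp', hp'_mem, h₁, h₂, hnot⟩ :=
    hM.couple_assigned_of_open hc (by simp [hpref]) hopen₁ hopen₂
  by_cases heq : hp' = hp
  · exact heq ▸ ⟨h₁, h₂⟩
  · rw [hpref] at hp'_mem hnot
    exact absurd (prefers_cons_of_ne hp'_mem heq) hnot

theorem single_eq_of_rivals (hM : I.Stable M) {r : R} {h : H} (hr : r ∈ I.singles)
    (hh : h ∈ I.singlePref r) (hexcl : ∀ r', M r' = some h → r' = r)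
    (htaken : ∀ h' ∈ I.singlePref r, h' ≠ h → ∃ r' ≠ r, M r' = some h') :
    M r = some h := by
  by_contra hne
  have hfree : HospFree M h := fun r' hr' => hne (hexcl r' hr' ▸ hr')
  obtain ⟨h', hMr, hh', -⟩ := hM.single_assigned_of_open hr hh (Or.inl hfree)
  obtain ⟨r', hr'r, hr'⟩ := htaken h' hh' fun h'_eq => hne (h'_eq ▸ hMr)
  exact hr'r (hM.1.eq_of_eq_some hr' hMr)

end Stable

end HRC1

theorem E3SAT.rIdx_occ (B : E3SAT n m) (l : Fin n × Bool) (k : Fin 2) :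
    B.rIdx (B.occ l k).1 (B.occ l k).2 = k := by
  unfold E3SAT.rIdx
  rw [B.occ_spec]
  fin_cases k
  · simp
  · simpa using B.occ_inj l

theorem xOfC_of_cX_eq (B : E3SAT n m) {i : Fin n} {r : Fin 4} {j : Fin m} {s : Fin 3}
    (h : cX B i r = Hos3E.C j s) : xOfC B j s = Res3E.X i r := by
  unfold cX at h
  injection h with hj hs
  have hocc := B.occ_spec (i, decide (r.val < 2)) ⟨r.val % 2, by omega⟩
  have hidx := B.rIdx_occ (i, decide (r.val < 2)) ⟨r.val % 2, by omega⟩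
  rw [hj, hs] at hocc hidx
  unfold xOfC
  fin_cases r <;> simp_all

theorem xOfC_eq_X (B : E3SAT n m) (j : Fin m) (s : Fin 3) :
    ∃ i r, xOfC B j s = Res3E.X i r := by
  unfold xOfC
  dsimp only
  split <;> exact ⟨_, _, rfl⟩

theorem instI33E_acceptsApplicants (B : E3SAT n m) : (instI33E B).AcceptsApplicants := by
  constructor
  · intro r hr h hh
    simp only [instI33E, List.mem_append, List.mem_flatMap, List.mem_map,
      List.mem_finRange, true_and] at hr
    rcases hr with (⟨j, rfl⟩ | ⟨j, rfl⟩) | ⟨i, r, rfl⟩ <;>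
      simp [instI33E] at hh <;> rcases hh with rfl | rfl | rfl <;> simp [instI33E]
  · intro c hc hp hhp
    simp only [instI33E, List.mem_append, List.mem_flatMap, List.mem_map,
      List.mem_finRange, List.mem_cons, List.not_mem_nil, or_false, true_and] at hc
    rcases hc with (⟨i, r, rfl⟩ | ⟨j, s, rfl⟩) | ⟨i, r, rfl | rfl⟩
    · have hX : Res3E.X i r ∈ (instI33E B).hospPref (cX B i r) := by
        obtain ⟨j, s, hjs⟩ : ∃ j s, cX B i r = Hos3E.C j s := ⟨_, _, rfl⟩
        simp [hjs, instI33E, xOfC_of_cX_eq B hjs]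
      fin_cases r <;> simp [instI33E] at hhp <;> rcases hhp with rfl | rfl | rfl <;>
        simp_all [instI33E]
    · fin_cases s <;> simp [instI33E] at hhp <;> rcases hhp with rfl | rfl <;> simp [instI33E]
    · simp [instI33E] at hhp; subst hhp; simp [instI33E]
    · simp [instI33E] at hhp; rcases hhp with rfl | rfl <;> simp [instI33E]

/-- `pCouple j s = (p_j^{s+1}, p_j^{s+4})`, whose second choice is `(c_j^{s+1}, zOf j s)`
with `zOf j s = z_j^{s+3}`. -/
def pCouple (j : Fin m) (s : Fin 3) : Res3E n m × Res3E n m :=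
  (Res3E.P j ⟨s, by omega⟩, Res3E.P j ⟨s + 3, by omega⟩)

def zOf (j : Fin m) (s : Fin 3) : Hos3E n m := Hos3E.Z j ⟨s + 2, by omega⟩

theorem couplePref_U0 (B : E3SAT n m) (i : Fin n) (r : Fin 4) :
    (instI33E B).couplePref (Res3E.U i r 0, Res3E.U i r 1) =
      [(Hos3E.Hh i r 0, Hos3E.Hh i r 1)] := by
  simp [instI33E]

theorem couplePref_U2 (B : E3SAT n m) (i : Fin n) (r : Fin 4) :
    (instI33E B).couplePref (Res3E.U i r 2, Res3E.U i r 3) =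
      [(Hos3E.Hh i r 0, Hos3E.Hh i r 3), (Hos3E.Hh i r 2, Hos3E.Hh i r 1)] := by
  simp [instI33E]

theorem mem_hospPref_Y (B : E3SAT n m) {i : Fin n} {r : Fin 4} {res : Res3E n m}
    (h : res ∈ (instI33E B).hospPref (Hos3E.Y i r)) :
    (∃ a, res = Res3E.X i a) ∨ res = Res3E.U i r 4 := by
  fin_cases r <;> simp [instI33E] at h <;> aesop

theorem pCouple_mem_couples (B : E3SAT n m) (j : Fin m) (s : Fin 3) :
    pCouple j s ∈ (instI33E B).couples := by
  simp [instI33E, pCouple]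

theorem couplePref_pCouple (B : E3SAT n m) (j : Fin m) (s : Fin 3) :
    (instI33E B).couplePref (pCouple j s) =
      [(Hos3E.Z j 0, Hos3E.Z j 1), (Hos3E.C j s, zOf j s)] := by
  simp [instI33E, pCouple, zOf]

theorem pCouple_fst_injective (j : Fin m) :
    Function.Injective fun s => (pCouple (n := n) j s).1 := by
  intro s t h
  simpa [pCouple, Fin.ext_iff] using h

theorem singlePref_T (B : E3SAT n m) (j : Fin m) :
    (instI33E B).singlePref (Res3E.T j) = List.ofFn (zOf j) := by
  simp [instI33E, zOf, List.ofFn_succ]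

theorem singlePref_Q (B : E3SAT n m) (j : Fin m) :
    (instI33E B).singlePref (Res3E.Q j) = List.ofFn (Hos3E.C j) := by
  simp [instI33E, List.ofFn_succ]

theorem mem_hospPref_Z0 (B : E3SAT n m) {j : Fin m} {res : Res3E n m}
    (h : res ∈ (instI33E B).hospPref (Hos3E.Z j 0)) : ∃ s, res = (pCouple j s).1 := by
  simp only [instI33E, reduceIte, List.mem_cons, List.not_mem_nil, or_false] at h
  rcases h with rfl | rfl | rfl
  exacts [⟨0, rfl⟩, ⟨1, rfl⟩, ⟨2, rfl⟩]

theorem mem_hospPref_Z1 (B : E3SAT n m) {j : Fin m} {res : Res3E n m}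
    (h : res ∈ (instI33E B).hospPref (Hos3E.Z j 1)) : ∃ s, res = (pCouple j s).2 := by
  simp [instI33E] at h
  rcases h with rfl | rfl | rfl
  exacts [⟨2, rfl⟩, ⟨1, rfl⟩, ⟨0, rfl⟩]

theorem hospPref_zOf (B : E3SAT n m) (j : Fin m) (s : Fin 3) :
    (instI33E B).hospPref (zOf j s) = [(pCouple j s).2, Res3E.T j] := by
  fin_cases s <;> simp [instI33E, zOf, pCouple]

theorem hospPref_C (B : E3SAT n m) (j : Fin m) (s : Fin 3) :
    (instI33E B).hospPref (Hos3E.C j s) = [(pCouple j s).1, xOfC B j s, Res3E.Q j] := by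
  simp [instI33E, pCouple]

variable {B : E3SAT n m} {M : Res3E n m → Option (Hos3E n m)}

theorem instI33E_mem_hospPref (hM : (instI33E B).Stable M) {res : Res3E n m}
    {h : Hos3E n m} (hres : M res = some h) : res ∈ (instI33E B).hospPref h :=
  hM.1.mem_hospPref (instI33E_acceptsApplicants B) hres

theorem U3_ne_Hh1_of_U4_eq_Y (hM : (instI33E B).Stable M) (i : Fin n) (r : Fin 4)
    (hu5 : M (Res3E.U i r 4) = some (Hos3E.Y i r)) :
    M (Res3E.U i r 3) ≠ some (Hos3E.Hh i r 1) := by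
  intro h31
  have hc₀ : (Res3E.U i r 0, Res3E.U i r 1) ∈ (instI33E B).couples := by simp [instI33E]
  have hc₂ : (Res3E.U i r 2, Res3E.U i r 3) ∈ (instI33E B).couples := by simp [instI33E]
  obtain ⟨hp, hp_mem, h2, h3⟩ := (hM.1.2.2.1 _ hc₂).resolve_left (by simp [h31])
  have h22 : M (Res3E.U i r 2) = some (Hos3E.Hh i r 2) := by
    rw [couplePref_U2] at hp_mem
    simp only [List.mem_cons, List.not_mem_nil, or_false] at hp_mem
    rcases hp_mem with rfl | rfl <;> simp_all
  have h00 : M (Res3E.U i r 0) ≠ some (Hos3E.Hh i r 0) := by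
    intro h00
    obtain ⟨hp', hp'_mem, -, h1⟩ := (hM.1.2.2.1 _ hc₀).resolve_left (by simp [h00])
    rw [couplePref_U0, List.mem_singleton] at hp'_mem
    subst hp'_mem
    simpa using hM.1.eq_of_eq_some h1 h31
  have h03 := hM.couple_eq_head_of_open hc₂ (couplePref_U2 B i r)
    (Or.inr (Or.inl fun res hres => ?_)) (Or.inr (Or.inl fun res hres => ?_))
  · simp [h22] at h03
  · rcases (by simpa [instI33E] using instI33E_mem_hospPref hM hres) with rfl | rfl | rfl
    · simp [hu5] at hres
    · exact h00 hres
    · simp [h22] at hres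
  · rcases (by simpa [instI33E] using instI33E_mem_hospPref hM hres) with rfl
    simp [h31] at hres

theorem U0_U1_eq_Hh_of_U4_eq_Y (hM : (instI33E B).Stable M) (i : Fin n) (r : Fin 4)
    (hu5 : M (Res3E.U i r 4) = some (Hos3E.Y i r)) :
    M (Res3E.U i r 0) = some (Hos3E.Hh i r 0) ∧
      M (Res3E.U i r 1) = some (Hos3E.Hh i r 1) := by
  have hc₀ : (Res3E.U i r 0, Res3E.U i r 1) ∈ (instI33E B).couples := by simp [instI33E]
  refine hM.couple_eq_head_of_open hc₀ (couplePref_U0 B i r) ?_ ?_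
  · by_cases h00 : M (Res3E.U i r 0) = some (Hos3E.Hh i r 0)
    · exact Or.inl h00
    refine Or.inr (HRC1.hospOpenFor_of_forall fun res hres => ?_)
    rcases (by simpa [instI33E] using instI33E_mem_hospPref hM hres) with rfl | rfl | rfl
    · simp [hu5] at hres
    · exact absurd hres h00
    · simp [HRC1.Prefers, instI33E]
  · by_cases h11 : M (Res3E.U i r 1) = some (Hos3E.Hh i r 1)
    · exact Or.inl h11
    refine Or.inr (Or.inl fun res hres => ?_)
    rcases (by simpa [instI33E] using instI33E_mem_hospPref hM hres) with rfl | rfl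
    · exact U3_ne_Hh1_of_U4_eq_Y hM i r hu5 hres
    · exact h11 hres

theorem U4_ne_Y (hM : (instI33E B).Stable M) (i : Fin n) (r : Fin 4) :
    M (Res3E.U i r 4) ≠ some (Hos3E.Y i r) := by
  intro hu5
  obtain ⟨h00, h11⟩ := U0_U1_eq_Hh_of_U4_eq_Y hM i r hu5
  have hc₂ : (Res3E.U i r 2, Res3E.U i r 3) ∈ (instI33E B).couples := by simp [instI33E]
  have hopen₂ : M (Res3E.U i r 2) = some (Hos3E.Hh i r 2) ∨
      (instI33E B).HospOpenFor M (Hos3E.Hh i r 2) (Res3E.U i r 2) := by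
    by_cases h22 : M (Res3E.U i r 2) = some (Hos3E.Hh i r 2)
    · exact Or.inl h22
    refine Or.inr (Or.inl fun res hres => ?_)
    rcases (by simpa [instI33E] using instI33E_mem_hospPref hM hres) with rfl
    exact h22 hres
  obtain ⟨hp, hp_mem, h2, h3, -⟩ := hM.couple_assigned_of_open hc₂
    (hp := (Hos3E.Hh i r 2, Hos3E.Hh i r 1)) (by simp [couplePref_U2]) hopen₂
    (Or.inr (Or.inr ⟨Res3E.U i r 1, h11, by simp [HRC1.Prefers, instI33E]⟩))
  rw [couplePref_U2] at hp_mem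
  simp only [List.mem_cons, List.not_mem_nil, or_false] at hp_mem
  rcases hp_mem with rfl | rfl
  · simpa using hM.1.eq_of_eq_some h2 h00
  · simpa using hM.1.eq_of_eq_some h3 h11

theorem Y_assigned_X (hM : (instI33E B).Stable M) (i : Fin n) (r : Fin 4) :
    ∃ a, M (Res3E.X i a) = some (Hos3E.Y i r) := by
  by_contra! hno
  have hU : Res3E.U i r 4 ∈ (instI33E B).singles := by simp [instI33E]
  refine U4_ne_Y hM i r (hM.single_eq_head_of_open hU (l := [Hos3E.Hh i r 0])
    (by simp [instI33E]) (Or.inl fun res hres => ?_))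
  rcases mem_hospPref_Y B (instI33E_mem_hospPref hM hres) with ⟨a, rfl⟩ | rfl
  · exact hno a hres
  · exact U4_ne_Y hM i r hres

theorem X_assigned_Y (hM : (instI33E B).Stable M) (i : Fin n) (a : Fin 4) :
    ∃ r, M (Res3E.X i a) = some (Hos3E.Y i r) := by
  choose f hf using Y_assigned_X hM i
  have hinj : Function.Injective f := fun r r' hrr' => by
    have h := (hf r).symm.trans (hrr' ▸ hf r')
    simpa using h
  obtain ⟨r, rfl⟩ := Finite.surjective_of_injective hinj a
  exact ⟨r, hf r⟩

theorem X_ne_C (hM : (instI33E B).Stable M) (i : Fin n) (a : Fin 4) (j : Fin m) (s : Fin 3) :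
    M (Res3E.X i a) ≠ some (Hos3E.C j s) := by
  obtain ⟨r, hr⟩ := X_assigned_Y hM i a
  simp [hr]

theorem pCouple_cases (hM : (instI33E B).Stable M) (j : Fin m) (s : Fin 3) :
    (M (pCouple j s).1 = none ∧ M (pCouple j s).2 = none) ∨
    (M (pCouple j s).1 = some (Hos3E.Z j 0) ∧ M (pCouple j s).2 = some (Hos3E.Z j 1)) ∨
    (M (pCouple j s).1 = some (Hos3E.C j s) ∧ M (pCouple j s).2 = some (zOf j s)) := by
  rcases hM.1.2.2.1 _ (pCouple_mem_couples B j s) with hnone | ⟨hp, hp_mem, h₁, h₂⟩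
  · exact Or.inl hnone
  rw [couplePref_pCouple] at hp_mem
  simp only [List.mem_cons, List.not_mem_nil, or_false] at hp_mem
  rcases hp_mem with rfl | rfl
  exacts [Or.inr (Or.inl ⟨h₁, h₂⟩), Or.inr (Or.inr ⟨h₁, h₂⟩)]

theorem exists_pCouple_eq_Z (hM : (instI33E B).Stable M) (j : Fin m) :
    ∃ a, M (pCouple j a).1 = some (Hos3E.Z j 0) ∧
      M (pCouple j a).2 = some (Hos3E.Z j 1) := by
  by_contra! hno
  have hfree₀ : HRC1.HospFree M (Hos3E.Z j 0) := fun res hres => by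
    obtain ⟨s, rfl⟩ := mem_hospPref_Z0 B (instI33E_mem_hospPref hM hres)
    rcases pCouple_cases hM j s with ⟨h₁, -⟩ | ⟨h₁, h₂⟩ | ⟨h₁, -⟩
    · simp [h₁] at hres
    · exact hno s h₁ h₂
    · simp [h₁] at hres
  have hfree₁ : HRC1.HospFree M (Hos3E.Z j 1) := fun res hres => by
    obtain ⟨s, rfl⟩ := mem_hospPref_Z1 B (instI33E_mem_hospPref hM hres)
    rcases pCouple_cases hM j s with ⟨-, h₂⟩ | ⟨h₁, -⟩ | ⟨-, h₂⟩
    · simp [h₂] at hres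
    · exact hfree₀ _ h₁
    · simp [h₂, zOf] at hres
  obtain ⟨h₁, h₂⟩ := hM.couple_eq_head_of_open (pCouple_mem_couples B j 0)
    (couplePref_pCouple B j 0) (Or.inr (Or.inl hfree₀)) (Or.inr (Or.inl hfree₁))
  exact hno 0 h₁ h₂

theorem pCouple_eq_C_of_ne (hM : (instI33E B).Stable M) {j : Fin m} {a : Fin 3}
    (ha : M (pCouple j a).1 = some (Hos3E.Z j 0)) {s : Fin 3} (hs : s ≠ a) :
    M (pCouple j s).1 = some (Hos3E.C j s) ∧ M (pCouple j s).2 = some (zOf j s) := by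
  rcases pCouple_cases hM j s with ⟨h₁, h₂⟩ | ⟨h₁, -⟩ | h
  · have hopen₁ : (instI33E B).HospOpenFor M (Hos3E.C j s) (pCouple j s).1 := by
      refine HRC1.hospOpenFor_of_forall fun res hres => ?_
      have hmem := instI33E_mem_hospPref hM hres
      rw [hospPref_C] at hmem ⊢
      obtain ⟨i, r, hx⟩ := xOfC_eq_X B j s
      simp only [List.mem_cons, List.not_mem_nil, or_false] at hmem
      rcases hmem with rfl | rfl | rfl
      · simp [h₁] at hres
      all_goals simp [HRC1.Prefers, hx, pCouple]
    have hopen₂ : (instI33E B).HospOpenFor M (zOf j s) (pCouple j s).2 := by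
      refine HRC1.hospOpenFor_of_forall fun res hres => ?_
      have hmem := instI33E_mem_hospPref hM hres
      rw [hospPref_zOf] at hmem ⊢
      simp only [List.mem_cons, List.not_mem_nil, or_false] at hmem
      rcases hmem with rfl | rfl
      · simp [h₂] at hres
      · simp [HRC1.Prefers, pCouple]
    obtain ⟨hp, -, h, -⟩ := hM.couple_assigned_of_open (pCouple_mem_couples B j s)
      (hp := (Hos3E.C j s, zOf j s)) (by simp [couplePref_pCouple]) (Or.inr hopen₁)
      (Or.inr hopen₂)
    simp [h₁] at h
  · exact absurd (pCouple_fst_injective j (hM.1.eq_of_eq_some h₁ ha)) hs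
  · exact h

theorem T_eq_zOf (hM : (instI33E B).Stable M) {j : Fin m} {a : Fin 3}
    (ha₁ : M (pCouple j a).1 = some (Hos3E.Z j 0))
    (ha₂ : M (pCouple j a).2 = some (Hos3E.Z j 1)) :
    M (Res3E.T j) = some (zOf j a) := by
  refine hM.single_eq_of_rivals (by simp [instI33E])
    (by rw [singlePref_T]; exact List.mem_ofFn.2 ⟨a, rfl⟩) (fun res hres => ?_)
    (fun h hh hne => ?_)
  · have hmem := instI33E_mem_hospPref hM hres
    rw [hospPref_zOf] at hmem
    simp only [List.mem_cons, List.not_mem_nil, or_false] at hmem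
    rcases hmem with rfl | rfl
    · have h := Option.some.inj (ha₂.symm.trans hres)
      simp only [zOf, Hos3E.Z.injEq, Fin.ext_iff, true_and] at h
      omega
    · rfl
  · rw [singlePref_T, List.mem_ofFn] at hh
    obtain ⟨s, rfl⟩ := hh
    have hs : s ≠ a := fun hsa => hne (hsa ▸ rfl)
    exact ⟨_, by simp [pCouple], (pCouple_eq_C_of_ne hM ha₁ hs).2⟩

theorem Q_eq_C (hM : (instI33E B).Stable M) {j : Fin m} {a : Fin 3}
    (ha : M (pCouple j a).1 = some (Hos3E.Z j 0)) :
    M (Res3E.Q j) = some (Hos3E.C j a) := by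
  refine hM.single_eq_of_rivals (by simp [instI33E])
    (by rw [singlePref_Q]; exact List.mem_ofFn.2 ⟨a, rfl⟩) (fun res hres => ?_)
    (fun h hh hne => ?_)
  · have hmem := instI33E_mem_hospPref hM hres
    rw [hospPref_C] at hmem
    simp only [List.mem_cons, List.not_mem_nil, or_false] at hmem
    rcases hmem with rfl | rfl | rfl
    · simp [ha] at hres
    · obtain ⟨i, r, hx⟩ := xOfC_eq_X B j a
      exact absurd hres (hx ▸ X_ne_C hM i r j a)
    · rfl
  · rw [singlePref_Q, List.mem_ofFn] at hh
    obtain ⟨s, rfl⟩ := hh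
    have hs : s ≠ a := fun hsa => hne (hsa ▸ rfl)
    exact ⟨_, by simp [pCouple], (pCouple_eq_C_of_ne hM ha hs).1⟩

theorem Z_matched (hM : (instI33E B).Stable M) (j : Fin m) (r : Fin 5) :
    ∃ res, M res = some (Hos3E.Z j r) := by
  obtain ⟨a, ha₁, ha₂⟩ := exists_pCouple_eq_Z hM j
  obtain rfl | rfl | ⟨s, rfl⟩ : r = 0 ∨ r = 1 ∨ ∃ s : Fin 3, r = ⟨s + 2, by omega⟩ := by
    fin_cases r
    exacts [Or.inl rfl, Or.inr (Or.inl rfl), Or.inr (Or.inr ⟨0, rfl⟩),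
      Or.inr (Or.inr ⟨1, rfl⟩), Or.inr (Or.inr ⟨2, rfl⟩)]
  · exact ⟨_, ha₁⟩
  · exact ⟨_, ha₂⟩
  · by_cases hs : s = a
    · exact ⟨_, hs ▸ T_eq_zOf hM ha₁ ha₂⟩
    · exact ⟨_, (pCouple_eq_C_of_ne hM ha₁ hs).2⟩

theorem C_matched (hM : (instI33E B).Stable M) (j : Fin m) (s : Fin 3) :
    ∃ res, M res = some (Hos3E.C j s) := by
  obtain ⟨a, ha₁, -⟩ := exists_pCouple_eq_Z hM j
  by_cases hs : s = a
  · exact ⟨_, hs ▸ Q_eq_C hM ha₁⟩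
  · exact ⟨_, (pCouple_eq_C_of_ne hM ha₁ hs).1⟩

theorem P_matched (hM : (instI33E B).Stable M) (j : Fin m) (s : Fin 6) :
    (M (Res3E.P j s)).isSome := by
  obtain ⟨a, ha₁, ha₂⟩ := exists_pCouple_eq_Z hM j
  obtain ⟨t, hst⟩ : ∃ t : Fin 3,
      Res3E.P j s = (pCouple j t).1 ∨ Res3E.P j s = (pCouple j t).2 := by
    fin_cases s
    exacts [⟨0, Or.inl rfl⟩, ⟨1, Or.inl rfl⟩, ⟨2, Or.inl rfl⟩, ⟨0, Or.inr rfl⟩,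
      ⟨1, Or.inr rfl⟩, ⟨2, Or.inr rfl⟩]
  by_cases ht : t = a
  · subst ht
    rcases hst with h | h <;> rw [h] <;> simp [ha₁, ha₂]
  · obtain ⟨h₁, h₂⟩ := pCouple_eq_C_of_ne hM ha₁ ht
    rcases hst with h | h <;> rw [h] <;> simp [h₁, h₂]

/-- In any stable matching `M` of the extended instance `I′₃₃(B)`, every hospital in
`Z ∪ C'` is matched and every resident in `P ∪ T ∪ Q` is matched. -/
theorem ZC_and_PTQ_matched {n m : ℕ} (B : E3SAT n m)
    (M : Res3E n m → Option (Hos3E n m)) (hM : (instI33E B).Stable M) :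
    (∀ (j : Fin m) (r : Fin 5), ∃ res, M res = some (Hos3E.Z j r)) ∧
    (∀ (j : Fin m) (s : Fin 3), ∃ res, M res = some (Hos3E.C j s)) ∧
    (∀ (j : Fin m) (s : Fin 6), (M (Res3E.P j s)).isSome) ∧
    (∀ j : Fin m, (M (Res3E.T j)).isSome) ∧
    (∀ j : Fin m, (M (Res3E.Q j)).isSome) := by
  refine ⟨Z_matched hM, C_matched hM, P_matched hM, fun j => ?_, fun j => ?_⟩
  · obtain ⟨a, ha₁, ha₂⟩ := exists_pCouple_eq_Z hM j
    simp [T_eq_zOf hM ha₁ ha₂]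
  · obtain ⟨a, ha₁, -⟩ := exists_pCouple_eq_Z hM j
    simp [Q_eq_C hM ha₁]
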